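/- arXiv:2101.05436 — 6 statements merged into one kernel-verified Lean document; each statement's English description precedes it below -/
import Mathlib

section
/- Let h : ℝ → ℝ be differentiable and let α : ℝ → ℝ be a class-K function (strictly increasing with α(0) = 0). If h(0) ≥ 0 and for every t ≥ 0 one has (deriv h) t + α(h t) ≥ 0, then h(t) ≥ 0 for every t ≥ 0. -/
/-- Comparison lemma for control barrier functions: if `h` is differentiable,
`α` is a class-K function (strictly increasing with `α 0 = 0`), `h 0 ≥ 0` and
`h' t + α (h t) ≥ 0` for all `t ≥ 0`, then `h t ≥ 0` for all `t ≥ 0`. -/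
theorem cbf_comparison (h α : ℝ → ℝ) (hdiff : Differentiable ℝ h)
    (hα_mono : StrictMono α) (hα0 : α 0 = 0)
    (h0 : h 0 ≥ 0) (hcond : ∀ t, 0 ≤ t → deriv h t + α (h t) ≥ 0) :
    ∀ t, 0 ≤ t → h t ≥ 0 := by
  intro t ht
  by_contra hneg
  push_neg at hneg
  have ht0 : 0 < t := by
    rcases eq_or_lt_of_le ht with h' | h'
    · exfalso; rw [← h'] at hneg; linarith
    · exact h'
  set S : Set ℝ := Set.Icc 0 t ∩ {u | 0 ≤ h u} with hS
  have hSne : S.Nonempty := ⟨0, ⟨le_refl 0, le_of_lt ht0⟩, h0⟩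
  have hSbd : BddAbove S := ⟨t, fun u hu => hu.1.2⟩
  have hSclosed : IsClosed S :=
    isClosed_Icc.inter (isClosed_le continuous_const hdiff.continuous)
  have hsmem : sSup S ∈ S := hSclosed.csSup_mem hSne hSbd
  set s : ℝ := sSup S with hs
  have hs0 : 0 ≤ s := hsmem.1.1
  have hst : s ≤ t := hsmem.1.2
  have hhs : 0 ≤ h s := hsmem.2
  have hlt : s < t := by
    rcases eq_or_lt_of_le hst with h' | h'
    · exfalso; rw [h'] at hhs; linarith
    · exact h'
  -- on (s, t), h < 0
  have hneg' : ∀ u ∈ Set.Ioo s t, h u < 0 := by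
    intro u hu
    by_contra hge
    push_neg at hge
    have : u ∈ S := ⟨⟨le_trans hs0 hu.1.le, hu.2.le⟩, hge⟩
    exact absurd (le_csSup hSbd this) (not_le.mpr hu.1)
  -- h is monotone on [s, t]
  have hmono : MonotoneOn h (Set.Icc s t) := by
    apply monotoneOn_of_deriv_nonneg (convex_Icc s t)
      (hdiff.continuous.continuousOn)
      (fun u _ => (hdiff u).differentiableWithinAt)
    intro u hu
    rw [interior_Icc] at hu
    have hu0 : 0 ≤ u := le_trans hs0 hu.1.le
    have hαneg : α (h u) < 0 := by
      have := hα_mono (hneg' u hu)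
      rwa [hα0] at this
    have := hcond u hu0
    linarith
  have := hmono ⟨le_refl s, hst⟩ ⟨hst, le_refl t⟩ hst
  linarith
end

section
/- Let X be a type, let X_d ⊆ X be a dangerous set, and let h : X → ℝ satisfy h(x) < 0 for every x ∈ X_d. Let x : ℝ → X be a trajectory such that the composed function H := h ∘ x : ℝ → ℝ is differentiable, and let α : ℝ → ℝ be a class-K function (strictly increasing with α(0) = 0). If H(0) ≥ 0 and for every t ≥ 0 one has (deriv H) t + α(H t) ≥ 0, then for every t ≥ 0 one has H(t) ≥ 0, and in particular x(t) ∉ X_d for every t ≥ 0. -/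
theorem nonneg_of_cbf (H : ℝ → ℝ) (hdiff : Differentiable ℝ H)
    (α : ℝ → ℝ) (hα_mono : StrictMono α) (hα0 : α 0 = 0)
    (h0 : H 0 ≥ 0)
    (hcond : ∀ t, 0 ≤ t → deriv H t + α (H t) ≥ 0) :
    ∀ t, 0 ≤ t → H t ≥ 0 := by
  intro t ht
  by_contra hlt
  push_neg at hlt
  have ht0 : (0:ℝ) < t := by
    rcases ht.lt_or_eq with h' | h'
    · exact h'
    · rw [← h'] at hlt; linarith
  set S : Set ℝ := {u | u ∈ Set.Icc (0:ℝ) t ∧ H u ≥ 0} with hS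
  have hSne : S.Nonempty := ⟨0, ⟨le_refl _, le_of_lt ht0⟩, h0⟩
  have hSbdd : BddAbove S := ⟨t, fun u hu => hu.1.2⟩
  set s := sSup S with hs
  have hScl : IsClosed S := by
    have : S = Set.Icc (0:ℝ) t ∩ H ⁻¹' Set.Ici 0 := by
      ext u; simp [hS, Set.mem_Icc, and_assoc]
    rw [this]
    exact isClosed_Icc.inter (isClosed_Ici.preimage hdiff.continuous)
  have hsS : s ∈ S := hScl.csSup_mem hSne hSbdd
  have hst : s < t := lt_of_le_of_ne hsS.1.2 (by
    intro heq
    rw [heq] at hsS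
    exact absurd hsS.2 (not_le.mpr hlt))
  have hderiv_pos : ∀ u ∈ Set.Ioo s t, 0 < deriv H u := by
    intro u hu
    have hu0 : 0 ≤ u := le_trans hsS.1.1 (le_of_lt hu.1)
    have hHu : H u < 0 := by
      by_contra hge
      push_neg at hge
      have : u ∈ S := ⟨⟨hu0, le_of_lt hu.2⟩, hge⟩
      exact absurd (le_csSup hSbdd this) (not_le.mpr hu.1)
    have : α (H u) < 0 := by
      have := hα_mono hHu
      rwa [hα0] at this
    linarith [hcond u hu0]
  have hmono : StrictMonoOn H (Set.Icc s t) :=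
    strictMonoOn_of_deriv_pos (convex_Icc s t)
      (hdiff.continuous.continuousOn)
      (by rwa [interior_Icc])
  have : H s < H t :=
    hmono (Set.left_mem_Icc.mpr (le_of_lt hst)) (Set.right_mem_Icc.mpr (le_of_lt hst)) hst
  linarith [hsS.2]

/-- Single-agent safety certificate via a control barrier function: if `h` is
negative on the dangerous set `Xd`, the barrier value `H = h ∘ x` along the
trajectory `x` is differentiable, starts nonnegative, and satisfies the CBF
condition `H' t + α (H t) ≥ 0` for `t ≥ 0` with `α` a class-K function, then
`H t ≥ 0` and the trajectory never enters `Xd` for `t ≥ 0`. -/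
theorem cbf_safety {X : Type*} (Xd : Set X) (h : X → ℝ)
    (hneg : ∀ x ∈ Xd, h x < 0)
    (x : ℝ → X) (α : ℝ → ℝ)
    (hdiff : Differentiable ℝ (h ∘ x))
    (hα_mono : StrictMono α) (hα0 : α 0 = 0)
    (h0 : (h ∘ x) 0 ≥ 0)
    (hcond : ∀ t, 0 ≤ t → deriv (h ∘ x) t + α ((h ∘ x) t) ≥ 0) :
    ∀ t, 0 ≤ t → (h ∘ x) t ≥ 0 ∧ x t ∉ Xd := by
  intro t ht
  have key := nonneg_of_cbf (h ∘ x) hdiff α hα_mono hα0 h0 hcond t ht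
  exact ⟨key, fun hmem => absurd key (not_le.mpr (hneg _ hmem))⟩
end

section
/- Let N ≥ 1 and for each agent i ∈ Fin N let X_i be a type, D_i ⊆ X_i a dangerous set, and h_i : X_i → ℝ a function with h_i(x) < 0 for every x ∈ D_i. Let x_i : ℝ → X_i be the trajectory of agent i such that H_i := h_i ∘ x_i : ℝ → ℝ is differentiable, and let α_i : ℝ → ℝ be a class-K function (strictly increasing with α_i(0) = 0). Suppose for every agent i: H_i(0) ≥ 0 and for every t ≥ 0, (deriv H_i) t + α_i(H_i t) ≥ 0. Then for every agent i and every t ≥ 0, H_i(t) ≥ 0 and x_i(t) ∉ D_i; i.e., no agent ever enters its dangerous set, so the multi-agent system is safe. -/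
lemma barrier_nonneg (H : ℝ → ℝ) (a : ℝ → ℝ)
    (hdiff : Differentiable ℝ H) (ha : StrictMono a) (ha0 : a 0 = 0)
    (h0 : H 0 ≥ 0) (hcond : ∀ t, 0 ≤ t → deriv H t + a (H t) ≥ 0) :
    ∀ t, 0 ≤ t → H t ≥ 0 := by
  intro t ht
  by_contra hlt
  push_neg at hlt
  set T : Set ℝ := {u | u ∈ Set.Icc (0:ℝ) t ∧ 0 ≤ H u} with hT
  have hTne : T.Nonempty := ⟨0, ⟨le_refl 0, ht⟩, h0⟩
  have hTbdd : BddAbove T := ⟨t, fun u hu => hu.1.2⟩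
  have hTclosed : IsClosed T := by
    apply IsClosed.inter isClosed_Icc
    exact isClosed_le continuous_const hdiff.continuous
  set s := sSup T with hs
  have hsT : s ∈ T := hTclosed.csSup_mem hTne hTbdd
  have hs0 : 0 ≤ s := hsT.1.1
  have hst : s ≤ t := hsT.1.2
  have hHs : 0 ≤ H s := hsT.2
  have hslt : s < t := lt_of_le_of_ne hst (fun e => by rw [e] at hHs; linarith)
  -- H is negative on (s, t]
  have hnegafter : ∀ u, s < u → u ≤ t → H u < 0 := by
    intro u hsu hut
    by_contra hnn
    push_neg at hnn
    have : u ∈ T := ⟨⟨le_trans hs0 hsu.le, hut⟩, hnn⟩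
    exact absurd (le_csSup hTbdd this) (not_le.mpr hsu)
  obtain ⟨c, hc, hderiv⟩ := exists_deriv_eq_slope H hslt
    hdiff.continuous.continuousOn (hdiff.differentiableOn)
  have hHc : H c < 0 := hnegafter c hc.1 hc.2.le
  have hc0 : 0 ≤ c := le_trans hs0 hc.1.le
  have hac : a (H c) < 0 := ha0 ▸ ha hHc
  have h1 := hcond c hc0
  have h2 : deriv H c < 0 := by
    rw [hderiv]
    apply div_neg_of_neg_of_pos
    · linarith [hnegafter t hslt le_rfl]
    · linarith
  linarith

/-- Proposition 1 (Multi-Agent Safety Certificates with Decentralized CBF):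
if every agent's barrier function `h i` is negative on its dangerous set `D i`,
each barrier value `H i = h i ∘ x i` along the agent's trajectory is
differentiable, nonnegative at time `0`, and satisfies the decentralized CBF
condition `(H i)' t + α i (H i t) ≥ 0` for `t ≥ 0` with `α i` a class-K
function, then for every agent `i` and every `t ≥ 0`, `H i t ≥ 0` and agent `i`
never enters its dangerous set, i.e. the multi-agent system is safe. -/
theorem multi_agent_cbf_safety {N : ℕ} (hN : 1 ≤ N)
    (X : Fin N → Type*) (D : ∀ i, Set (X i)) (h : ∀ i, X i → ℝ)
    (hneg : ∀ i, ∀ x ∈ D i, h i x < 0)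
    (x : ∀ i, ℝ → X i) (α : Fin N → ℝ → ℝ)
    (hdiff : ∀ i, Differentiable ℝ (h i ∘ x i))
    (hα_mono : ∀ i, StrictMono (α i)) (hα0 : ∀ i, α i 0 = 0)
    (h0 : ∀ i, (h i ∘ x i) 0 ≥ 0)
    (hcond : ∀ i, ∀ t, 0 ≤ t → deriv (h i ∘ x i) t + α i ((h i ∘ x i) t) ≥ 0) :
    ∀ i, ∀ t, 0 ≤ t → (h i ∘ x i) t ≥ 0 ∧ x i t ∉ D i := by
  intro i t ht
  have hH := barrier_nonneg (h i ∘ x i) (α i) (hdiff i) (hα_mono i) (hα0 i)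
    (h0 i) (hcond i) t ht
  refine ⟨hH, fun hD => ?_⟩
  have := hneg i _ hD
  simp only [Function.comp_apply] at hH
  linarith
end

section
/- Let h : ℝ → ℝ be differentiable, let λ ≥ 0 and T ≥ 0, and suppose h(0) > 0 and that for every t ∈ [0, T] with h(t) ≥ 0 one has (deriv h) t ≥ -λ · h(t) (the derivative condition is only assumed on the set where h is nonnegative). Then h(t) ≥ h(0) · exp(-λ t) for every t ∈ [0, T]; in particular h(t) > 0 for every t ∈ [0, T]. -/
/-! A comparison function `h a * exp (-μ * (t - a))` with rate `μ > λ` can first touch `h` only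
at a point where `h > 0`; there the hypothesis makes `h` decrease strictly more slowly, so the
comparison function stays below `h`. Letting `μ ↓ λ` gives the bound with rate `λ`. -/

open Set Real Filter Topology

section ExpLowerBound

variable {h h' : ℝ → ℝ} {a b lam : ℝ}

theorem mul_exp_le_of_deriv_ge_of_lt_rate (hf : ContinuousOn h (Icc a b))
    (hf' : ∀ t ∈ Ico a b, HasDerivWithinAt h (h' t) (Ici t) t) (ha : 0 < h a)
    (bound : ∀ t ∈ Ico a b, 0 < h t → -lam * h t ≤ h' t) {μ : ℝ} (hμ : lam < μ) :
    ∀ t ∈ Icc a b, h a * exp (-μ * (t - a)) ≤ h t := by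
  have hB : ∀ t, HasDerivAt (fun s ↦ h a * exp (-μ * (s - a)))
      (-μ * (h a * exp (-μ * (t - a)))) t := fun t ↦
    ((((hasDerivAt_id' t).sub_const a).const_mul (-μ)).exp.const_mul (h a)).congr_deriv (by ring)
  refine fun t ht ↦ image_le_of_deriv_right_lt_deriv_boundary'
    (fun x _ ↦ (hB x).continuousAt.continuousWithinAt) (fun x _ ↦ (hB x).hasDerivWithinAt)
    (by simp) hf hf' ?_ ht
  intro x hx hxe
  have hx_pos : 0 < h x := hxe ▸ by positivity
  rw [hxe]
  calc -μ * h x < -lam * h x := by gcongr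
    _ ≤ h' x := bound x hx hx_pos

theorem mul_exp_le_of_deriv_ge (hf : ContinuousOn h (Icc a b))
    (hf' : ∀ t ∈ Ico a b, HasDerivWithinAt h (h' t) (Ici t) t) (ha : 0 < h a)
    (bound : ∀ t ∈ Ico a b, 0 < h t → -lam * h t ≤ h' t) :
    ∀ t ∈ Icc a b, h a * exp (-lam * (t - a)) ≤ h t := by
  intro t ht
  have hlim : Tendsto (fun μ ↦ h a * exp (-μ * (t - a))) (𝓝[>] lam)
      (𝓝 (h a * exp (-lam * (t - a)))) :=
    (Continuous.tendsto (by fun_prop) lam).mono_left nhdsWithin_le_nhds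
  exact le_of_tendsto hlim <| eventually_nhdsWithin_of_forall fun μ hμ ↦
    mul_exp_le_of_deriv_ge_of_lt_rate hf hf' ha bound hμ t ht

end ExpLowerBound

theorem cbf_linear_gronwall_superlevel_general (h : ℝ → ℝ) (hdiff : Differentiable ℝ h)
    (lam T : ℝ) (h0 : h 0 > 0)
    (hcond : ∀ t ∈ Set.Icc (0 : ℝ) T, h t ≥ 0 → deriv h t ≥ -lam * h t) :
    ∀ t ∈ Set.Icc (0 : ℝ) T, h t ≥ h 0 * Real.exp (-lam * t) ∧ h t > 0 := by
  intro t ht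
  have hbound := mul_exp_le_of_deriv_ge hdiff.continuous.continuousOn
    (fun s _ ↦ (hdiff s).hasDerivAt.hasDerivWithinAt) h0
    (fun s hs hpos ↦ hcond s (Ico_subset_Icc_self hs) hpos.le) t ht
  rw [sub_zero] at hbound
  exact ⟨hbound, (mul_pos h0 (exp_pos _)).trans_le hbound⟩

/-- Exponential lower bound when the linear CBF derivative condition
`h' t ≥ -λ * h t` is only assumed on the superlevel set `{h ≥ 0}`: if `h` is
differentiable with `h 0 > 0`, then `h t ≥ h 0 * exp (-λ * t)` on `[0, T]`;
in particular `h t > 0` on `[0, T]`. -/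
theorem cbf_linear_gronwall_superlevel (h : ℝ → ℝ) (hdiff : Differentiable ℝ h)
    (lam T : ℝ) (hlam : 0 ≤ lam) (hT : 0 ≤ T) (h0 : h 0 > 0)
    (hcond : ∀ t ∈ Set.Icc (0 : ℝ) T, h t ≥ 0 → deriv h t ≥ -lam * h t) :
    ∀ t ∈ Set.Icc (0 : ℝ) T, h t ≥ h 0 * Real.exp (-lam * t) ∧ h t > 0 :=
  cbf_linear_gronwall_superlevel_general h hdiff lam T h0 hcond
end

section
/- Let α : ℝ → ℝ be a class-K function (strictly increasing with α(0) = 0) that is Lipschitz with constant K ≥ 0. Let h : ℝ → ℝ be differentiable with h(0) > 0, and suppose that for every t ≥ 0 with h(t) ≥ 0 one has (deriv h) t + α(h t) ≥ 0. Then h(t) ≥ h(0) · exp(-K t) for every t ≥ 0; in particular h(t) > 0 for all t ≥ 0. -/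
/-!
On `{h ≥ 0}` the Lipschitz bound `α x ≤ K x` turns the barrier condition into the linear
differential inequality `h' ≥ -K h`, and the lower Grönwall estimate gives
`h t ≥ h 0 * exp (-K t)` as long as `h` has stayed nonnegative. Applied at the first time
`h` would vanish, this estimate shows that `h` is still positive there, so no such time exists.
-/

open Set Real

theorem ContinuousOn.exists_first_nonpos {α β : Type*} [ConditionallyCompleteLinearOrder α]
    [TopologicalSpace α] [OrderTopology α] [LinearOrder β] [Zero β] [TopologicalSpace β]
    [OrderClosedTopology β] {f : α → β} {a b : α} (hf : ContinuousOn f (Icc a b))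
    (hab : a ≤ b) (hb : f b ≤ 0) :
    ∃ c ∈ Icc a b, f c ≤ 0 ∧ ∀ s ∈ Ico a c, 0 < f s := by
  have hclosed : IsClosed (Icc a b ∩ f ⁻¹' Iic 0) :=
    hf.preimage_isClosed_of_isClosed isClosed_Icc isClosed_Iic
  obtain ⟨c, ⟨hc, hc0⟩, hleast⟩ :=
    (isCompact_Icc.of_isClosed_subset hclosed inter_subset_left).exists_isLeast
      ⟨b, right_mem_Icc.2 hab, hb⟩
  refine ⟨c, hc, hc0, fun s hs => lt_of_not_ge fun hs0 => ?_⟩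
  exact hs.2.not_ge (hleast ⟨⟨hs.1, hs.2.le.trans hc.2⟩, hs0⟩)

theorem mul_exp_le_of_mul_le_deriv {f f' : ℝ → ℝ} {K a b : ℝ} (hf : ContinuousOn f (Icc a b))
    (hf' : ∀ x ∈ Ico a b, HasDerivWithinAt f (f' x) (Ici x) x)
    (bound : ∀ x ∈ Ico a b, K * f x ≤ f' x) :
    ∀ x ∈ Icc a b, f a * exp (K * (x - a)) ≤ f x := by
  intro x hx
  have := le_gronwallBound_of_liminf_deriv_right_le (f := -f) (f' := -f') (δ := -f a)
    (K := K) (ε := 0) hf.neg (fun x hx _ hr => (hf' x hx).neg.liminf_right_slope_le hr)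
    le_rfl (fun x hx => by simpa using bound x hx) x hx
  simp only [gronwallBound_ε0, Pi.neg_apply] at this
  linarith

theorem cbf_lipschitz_classK_invariance_general (α : ℝ → ℝ) (K : ℝ) (hK : 0 ≤ K)
    (hα0 : α 0 = 0)
    (hα_lip : LipschitzWith (Real.toNNReal K) α)
    (h : ℝ → ℝ) (hdiff : Differentiable ℝ h) (h0 : h 0 > 0)
    (hcond : ∀ t, 0 ≤ t → h t ≥ 0 → deriv h t + α (h t) ≥ 0) :
    ∀ t, 0 ≤ t → h t ≥ h 0 * Real.exp (-K * t) ∧ h t > 0 := by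
  have hα_le : ∀ x, 0 ≤ x → α x ≤ K * x := fun x hx => by
    simpa [Real.coe_toNNReal K hK, abs_of_nonneg hx] using
      (le_abs_self _).trans (hα_lip.norm_le_mul hα0 x)
  have hlinear : ∀ s, 0 ≤ s → 0 ≤ h s → -K * h s ≤ deriv h s := fun s hs hhs => by
    linarith [hcond s hs hhs, hα_le (h s) hhs]
  have hlower : ∀ t, 0 ≤ t → (∀ s ∈ Ico 0 t, 0 ≤ h s) → h 0 * exp (-K * t) ≤ h t := by
    intro t ht hnonneg
    simpa using mul_exp_le_of_mul_le_deriv (K := -K) hdiff.continuous.continuousOn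
      (fun s _ => (hdiff s).hasDerivAt.hasDerivWithinAt)
      (fun s hs => hlinear s hs.1 (hnonneg s hs)) t (right_mem_Icc.2 ht)
  have hpos : ∀ t, 0 ≤ t → 0 < h t := by
    intro t ht
    by_contra! hneg
    obtain ⟨c, hc, hc0, hpos⟩ := hdiff.continuous.continuousOn.exists_first_nonpos ht hneg
    have := hlower c hc.1 fun s hs => (hpos s hs).le
    linarith [mul_pos h0 (exp_pos (-K * c))]
  exact fun t ht => ⟨hlower t ht fun s hs => (hpos s hs.1).le, hpos t ht⟩

/-- Forward invariance with a Lipschitz class-K function: if `α` is strictly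
increasing with `α 0 = 0` and Lipschitz with constant `K ≥ 0`, `h` is
differentiable with `h 0 > 0`, and the CBF condition `h' t + α (h t) ≥ 0`
holds for every `t ≥ 0` at which `h t ≥ 0`, then `h t ≥ h 0 * exp (-K * t)`
for all `t ≥ 0`; in particular `h t > 0` for all `t ≥ 0`. -/
theorem cbf_lipschitz_classK_invariance (α : ℝ → ℝ) (K : ℝ) (hK : 0 ≤ K)
    (hα_mono : StrictMono α) (hα0 : α 0 = 0)
    (hα_lip : LipschitzWith (Real.toNNReal K) α)
    (h : ℝ → ℝ) (hdiff : Differentiable ℝ h) (h0 : h 0 > 0)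
    (hcond : ∀ t, 0 ≤ t → h t ≥ 0 → deriv h t + α (h t) ≥ 0) :
    ∀ t, 0 ≤ t → h t ≥ h 0 * Real.exp (-K * t) ∧ h t > 0 :=
  cbf_lipschitz_classK_invariance_general α K hK hα0 hα_lip h hdiff h0 hcond
end

section
/- Let N ≥ 1 and for each i ∈ Fin N let X_i be a type, D_i ⊆ X_i a dangerous set, and h_i : X_i → ℝ with h_i(x) < 0 for every x ∈ D_i. Let x_i : ℝ → X_i be trajectories such that each H_i := h_i ∘ x_i is differentiable, and let α : ℝ → ℝ be a class-K function (strictly increasing with α(0) = 0) such that for every i and every t ≥ 0, (deriv H_i) t + α(H_i t) ≥ 0. Define the global barrier value h_g(t) := min over i ∈ Fin N of H_i(t). If h_g(0) ≥ 0, then for every t ≥ 0 one has h_g(t) ≥ 0 and, for every i, x_i(t) ∉ D_i; i.e., the global state never enters the global dangerous set {some agent is in its dangerous set}. -/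
lemma cbf_nonneg (H : ℝ → ℝ) (hd : Differentiable ℝ H)
    (α : ℝ → ℝ) (hα_mono : StrictMono α) (hα0 : α 0 = 0)
    (hc : ∀ t, 0 ≤ t → deriv H t + α (H t) ≥ 0)
    (h0 : 0 ≤ H 0) : ∀ t, 0 ≤ t → 0 ≤ H t := by
  intro t ht
  by_contra hlt
  push_neg at hlt
  set S : Set ℝ := Set.Icc 0 t ∩ H ⁻¹' Set.Ici 0 with hS
  have hSne : S.Nonempty := ⟨0, ⟨le_refl 0, ht⟩, h0⟩
  have hScomp : IsCompact S :=
    isCompact_Icc.inter_right (isClosed_Ici.preimage hd.continuous)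
  obtain ⟨ht₀S, _⟩ := hScomp.sSup_mem hSne
  set t₀ := sSup S
  have ht₀0 : 0 ≤ t₀ := ht₀S.1
  have ht₀H : 0 ≤ H t₀ := (hScomp.sSup_mem hSne).2
  have hneg' : ∀ s, t₀ < s → s ≤ t → H s < 0 := by
    intro s hs hst
    by_contra hge
    push_neg at hge
    have : s ∈ S := ⟨⟨le_trans ht₀0 hs.le, hst⟩, hge⟩
    exact absurd (le_csSup hScomp.bddAbove this) (not_le.mpr hs)
  have ht₀t : t₀ < t := by
    rcases lt_or_eq_of_le ht₀S.2 with h' | h'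
    · exact h'
    · exact absurd (h' ▸ ht₀H) (not_le.mpr hlt)
  have hmono : StrictMonoOn H (Set.Icc t₀ t) := by
    apply strictMonoOn_of_deriv_pos (convex_Icc t₀ t) hd.continuous.continuousOn
    intro s hs
    rw [interior_Icc] at hs
    have hsneg : H s < 0 := hneg' s hs.1 hs.2.le
    have : α (H s) < 0 := hα0 ▸ hα_mono hsneg
    have := hc s (le_trans ht₀0 hs.1.le)
    linarith
  have := hmono (Set.left_mem_Icc.mpr ht₀t.le) (Set.right_mem_Icc.mpr ht₀t.le) ht₀t
  linarith

/-- Proposition 2 (global CBF from decentralized CBFs): define the global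
barrier value `hg t = min_i (h i ∘ x i) t`. If each `h i` is negative on the
dangerous set `D i`, each `H i = h i ∘ x i` is differentiable and satisfies the
decentralized CBF condition `(H i)' t + α (H i t) ≥ 0` for `t ≥ 0` with `α` a
class-K function, and `hg 0 ≥ 0`, then `hg t ≥ 0` for all `t ≥ 0` and no agent
ever enters its dangerous set, i.e. the global state never enters the global
dangerous set. -/
theorem global_cbf_from_decentralized {N : ℕ} (hN : 1 ≤ N)
    (X : Fin N → Type*) (D : ∀ i, Set (X i)) (h : ∀ i, X i → ℝ)
    (hneg : ∀ i, ∀ x ∈ D i, h i x < 0)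
    (x : ∀ i, ℝ → X i)
    (hdiff : ∀ i, Differentiable ℝ (h i ∘ x i))
    (α : ℝ → ℝ) (hα_mono : StrictMono α) (hα0 : α 0 = 0)
    (hcond : ∀ i, ∀ t, 0 ≤ t → deriv (h i ∘ x i) t + α ((h i ∘ x i) t) ≥ 0)
    (hg : ℝ → ℝ)
    (hg_def : ∀ t, hg t =
      Finset.univ.inf' (Finset.univ_nonempty_iff.mpr (Fin.pos_iff_nonempty.mp hN))
        (fun i => (h i ∘ x i) t))
    (hg0 : hg 0 ≥ 0) :
    ∀ t, 0 ≤ t → hg t ≥ 0 ∧ ∀ i, x i t ∉ D i := by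
  have hHi0 : ∀ i, 0 ≤ (h i ∘ x i) 0 := by
    intro i
    calc (0:ℝ) ≤ hg 0 := hg0
    _ ≤ (h i ∘ x i) 0 := by
        rw [hg_def 0]
        exact Finset.inf'_le _ (Finset.mem_univ i)
  have hHi : ∀ i, ∀ t, 0 ≤ t → 0 ≤ (h i ∘ x i) t := fun i =>
    cbf_nonneg _ (hdiff i) α hα_mono hα0 (hcond i) (hHi0 i)
  intro t ht
  constructor
  · rw [hg_def t]
    exact Finset.le_inf' _ _ fun i _ => hHi i t ht
  · intro i hmem
    exact absurd (hHi i t ht) (not_le.mpr (hneg i _ hmem))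
end
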